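/- arXiv:2202.05823 — 5 statements merged into one kernel-verified Lean document; each statement's English description precedes it below -/
import Mathlib

section
/- Let a ≠ b be nonnegative constants and ρ → 0. Then the Rényi divergence of order 1/2 between Ber(aρ) and Ber(bρ) satisfies I(aρ, bρ) = (√a − √b)² ρ + O(ρ²). Formally: there exist constans C, ρ₀ > 0 such that |I(aρ,bρ) − (√a−√b)²ρ| ≤ Cρ² for all 0 < ρ ≤ ρ₀. -/
/-- Twice the Rényi divergence of order 1/2 between `Ber(p)` and `Ber(q)`:
`I(p,q) = −2 log((1−p)^{1/2}(1−q)^{1/2} + p^{1/2}q^{1/2})`. -/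
noncomputable def renyiBer (p q : ℝ) : ℝ :=
  -2 * Real.log (Real.sqrt (1 - p) * Real.sqrt (1 - q) + Real.sqrt p * Real.sqrt q)

/-!
Write `B(p,q) = √(1-p)√(1-q) + √p√q` for the Bhattacharyya coefficient, so that
`I(p,q) = -2 log B(p,q)`. Since `√(1-p)√(1-q) = √(1-t)` with `t = p + q - pq`, the second-order
bounds `1 - t/2 - t²/2 ≤ √(1-t) ≤ 1 - t/2` give `B(p,q) = 1 - (√p - √q)²/2 + O((p+q)²)`, and
`log (1 + u) = u + O(u²)` turns this into `I(p,q) = (√p - √q)² + O((p+q)²)`.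
At `p = aρ`, `q = bρ` this is the claim, because `(√(aρ) - √(bρ))² = (√a - √b)² ρ`.
-/

open Real

noncomputable def bhattacharyyaBer (p q : ℝ) : ℝ :=
  √(1 - p) * √(1 - q) + √p * √q

lemma renyiBer_eq_neg_two_mul_log_bhattacharyyaBer (p q : ℝ) :
    renyiBer p q = -2 * log (bhattacharyyaBer p q) :=
  rfl

lemma sqrt_one_sub_le {t : ℝ} (ht : t ≤ 2) : √(1 - t) ≤ 1 - t / 2 :=
  (sqrt_le_left (by linarith)).2 (by nlinarith [sq_nonneg t])

lemma one_sub_sub_le_sqrt_one_sub {t : ℝ} (ht₀ : 0 ≤ t) (ht₁ : t ≤ 1) :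
    1 - t / 2 - t ^ 2 / 2 ≤ √(1 - t) := by
  have hfactor : 1 - t / 2 - t ^ 2 / 2 = (1 - t) * (1 + t / 2) := by ring
  refine le_sqrt_of_sq_le ?_
  rw [hfactor, mul_pow]
  -- after dividing by `1 - t`: `(1 - t) (1 + t/2)² = 1 - t² (3 + t) / 4 ≤ 1`
  nlinarith [mul_nonneg (sub_nonneg.2 ht₁) (mul_nonneg (sq_nonneg t) (by linarith : 0 ≤ 3 + t))]

lemma abs_log_one_add_sub_self_le {u : ℝ} (hu : |u| ≤ 1 / 2) :
    |log (1 + u) - u| ≤ 2 * u ^ 2 := by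
  have key := abs_log_sub_add_sum_range_le (x := -u) (by rw [abs_neg]; linarith) 1
  simp only [Finset.sum_range_one, pow_one, Nat.cast_zero, zero_add, div_one, sub_neg_eq_add,
    abs_neg] at key
  calc |log (1 + u) - u| = |-u + log (1 + u)| := by ring_nf
    _ ≤ |u| ^ 2 / (1 - |u|) := key
    _ ≤ |u| ^ 2 / (1 / 2) := by gcongr; linarith
    _ = 2 * u ^ 2 := by rw [sq_abs]; ring

lemma sqrt_sub_sqrt_sq {p q : ℝ} (hp : 0 ≤ p) (hq : 0 ≤ q) :
    (√p - √q) ^ 2 = p + q - 2 * (√p * √q) := by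
  rw [sub_sq, sq_sqrt hp, sq_sqrt hq]
  ring

lemma abs_bhattacharyyaBer_sub_le {p q : ℝ} (hp₀ : 0 ≤ p) (hq₀ : 0 ≤ q) (hp₁ : p ≤ 1)
    (hq₁ : q ≤ 1) :
    |bhattacharyyaBer p q - (1 - (√p - √q) ^ 2 / 2)| ≤ (p + q) ^ 2 / 2 := by
  set t := p + q - p * q with ht
  have ht₀ : 0 ≤ t := by nlinarith
  have ht₁ : t ≤ 1 := by nlinarith
  have htpq : t ≤ p + q := by nlinarith
  have hprod : √(1 - p) * √(1 - q) = √(1 - t) := by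
    rw [← sqrt_mul (by linarith), ht]
    ring_nf
  have hupper := sqrt_one_sub_le (ht₁.trans one_le_two)
  have hlower := one_sub_sub_le_sqrt_one_sub ht₀ ht₁
  have ht_sq : t ^ 2 ≤ (p + q) ^ 2 := pow_le_pow_left₀ ht₀ htpq 2
  rw [bhattacharyyaBer, hprod, sqrt_sub_sqrt_sq hp₀ hq₀, abs_le]
  constructor <;> nlinarith

lemma abs_renyiBer_sub_le {p q : ℝ} (hp : 0 ≤ p) (hq : 0 ≤ q) (hpq : p + q ≤ 1 / 2) :
    |renyiBer p q - (√p - √q) ^ 2| ≤ 5 * (p + q) ^ 2 := by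
  set d := (√p - √q) ^ 2
  set u := bhattacharyyaBer p q - 1
  have hd₀ : 0 ≤ d := sq_nonneg _
  have hd : d ≤ p + q := by
    have : 0 ≤ √p * √q := by positivity
    linarith [sqrt_sub_sqrt_sq hp hq]
  have hB : |u + d / 2| ≤ (p + q) ^ 2 / 2 := by
    have := abs_bhattacharyyaBer_sub_le hp hq (by linarith) (by linarith)
    rwa [show bhattacharyyaBer p q - (1 - d / 2) = u + d / 2 by ring] at this
  have hu : |u| ≤ p + q := by
    rw [abs_le] at hB ⊢
    constructor <;> nlinarith
  have hu_sq : u ^ 2 ≤ (p + q) ^ 2 := sq_le_sq' (abs_le.1 hu).1 (abs_le.1 hu).2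
  have hlog := abs_log_one_add_sub_self_le (hu.trans hpq)
  have hsplit : renyiBer p q - d = -2 * (log (1 + u) - u) - 2 * (u + d / 2) := by
    rw [renyiBer_eq_neg_two_mul_log_bhattacharyyaBer, show bhattacharyyaBer p q = 1 + u by ring]
    ring
  calc |renyiBer p q - d| ≤ 2 * |log (1 + u) - u| + 2 * |u + d / 2| := by
        rw [hsplit]
        refine (abs_sub _ _).trans_eq ?_
        simp only [abs_mul, abs_neg, abs_two]
    _ ≤ 5 * (p + q) ^ 2 := by linarith

lemma sqrt_mul_sub_sqrt_mul_sq {a b ρ : ℝ} (ha : 0 ≤ a) (hb : 0 ≤ b) (hρ : 0 ≤ ρ) :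
    (√(a * ρ) - √(b * ρ)) ^ 2 = (√a - √b) ^ 2 * ρ := by
  rw [sqrt_mul ha, sqrt_mul hb, ← sub_mul, mul_pow, sq_sqrt hρ]

theorem stmt5_general (a b : ℝ) (ha : 0 ≤ a) (hb : 0 ≤ b) :
    ∃ C ρ₀ : ℝ, 0 < C ∧ 0 < ρ₀ ∧ ∀ ρ : ℝ, 0 < ρ → ρ ≤ ρ₀ →
      |renyiBer (a * ρ) (b * ρ) - (Real.sqrt a - Real.sqrt b) ^ 2 * ρ| ≤ C * ρ ^ 2 := by
  refine ⟨5 * (a + b) ^ 2 + 1, 1 / (2 * (a + b) + 1), by positivity, by positivity, ?_⟩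
  intro ρ hρ hρ₀
  have hsmall : a * ρ + b * ρ ≤ 1 / 2 := by
    rw [le_div_iff₀ (by positivity)] at hρ₀
    nlinarith
  rw [← sqrt_mul_sub_sqrt_mul_sq ha hb hρ.le]
  calc _ ≤ 5 * (a * ρ + b * ρ) ^ 2 :=
        abs_renyiBer_sub_le (by positivity) (by positivity) hsmall
    _ ≤ (5 * (a + b) ^ 2 + 1) * ρ ^ 2 := by nlinarith [sq_nonneg ρ]

/-- For fixed `a ≠ b ≥ 0`, `I(aρ, bρ) = (√a − √b)² ρ + O(ρ²)` as `ρ → 0`. -/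
theorem stmt5 (a b : ℝ) (ha : 0 ≤ a) (hb : 0 ≤ b) (hab : a ≠ b) :
    ∃ C ρ₀ : ℝ, 0 < C ∧ 0 < ρ₀ ∧ ∀ ρ : ℝ, 0 < ρ → ρ ≤ ρ₀ →
      |renyiBer (a * ρ) (b * ρ) - (Real.sqrt a - Real.sqrt b) ^ 2 * ρ| ≤ C * ρ ^ 2 :=
  stmt5_general a b ha hb
end

section
/- Let P_z and P_w be two multilayer SBM distributions on symmetric binary tensors X ∈ {0,1}^{N×N×T} with zero diagonal, corresponding to labelings z, w : [N] → {1,2} with common interaction distributions f = ⊗_t Ber(p_t) (intra-block) and g = ⊗_t Ber(q_t) (inter-block). Then the order-1/2 Rényi divergence satisfies D_{1/2}(P_z ‖ P_w) = (1/2) d_Mir(z,w) · I_T, where I_T = Σ_{t=1}^T I(p_t, q_t) and I(p,q) = D_{1/2}(Ber(p) ‖ Ber(q)). -/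
/-- The set of unordered pairs `{i,j} ⊆ [N]`, encoded as ordered pairs with `i < j`. -/
abbrev PairIdx (N : ℕ) := {e : Fin N × Fin N // e.1 < e.2}

/-- Bernoulli density with mean `θ`: `Ber_θ(x) = θ^x (1−θ)^{1−x}`. -/
def bern (θ : ℝ) (x : Bool) : ℝ := if x then θ else 1 - θ

/-- Density of the two-block multilayer SBM with labeling `z`, intra-block link
probabilities `p t` and inter-block link probabilities `q t`, on symmetric binary
tensors encoded by their strictly-upper-triangular entries. -/
def sbmDensity {N T : ℕ} (z : Fin N → Fin 2) (p q : Fin T → ℝ)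
    (X : PairIdx N → Fin T → Bool) : ℝ :=
  ∏ e : PairIdx N, ∏ t : Fin T,
    bern (if z e.1.1 = z e.1.2 then p t else q t) (X e t)

/-- Number of unordered pairs `{i,j}`, `i ≠ j`, with indicator `[z i = z j] = a`
and `[w i = w j] = b`. -/
def pairCount {N K : ℕ} (z w : Fin N → Fin K) (a b : Bool) : ℕ :=
  (Finset.univ.filter (fun p : Fin N × Fin N =>
    p.1 < p.2 ∧ decide (z p.1 = z p.2) = a ∧ decide (w p.1 = w p.2) = b)).card

/-!
The Bhattacharyya coefficient `∑_X √(P_z(X) P_w(X))` of two product densities factorizes over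
the coordinates, so `-2 log` of it is the sum, over pairs `{i,j}` and layers `t`, of the
Bernoulli divergences between the link probabilities of the pair under `z` and under `w`. Such a
term vanishes when `z` and `w` agree on whether `i` and `j` share a block, and equals
`I(p_t, q_t)` otherwise (either way round, by symmetry); the disagreeing pairs number
`M₀₁ + M₁₀ = d_Mir(z,w) / 2`.
-/

open Finset

section ProductAffinity

variable {ι α : Type*} [Fintype ι] [DecidableEq ι] [Fintype α]

theorem sum_sqrt_prod_mul_prod (f g : ι → α → ℝ) (hf : ∀ i x, 0 ≤ f i x)
    (hg : ∀ i x, 0 ≤ g i x) :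
    ∑ X : ι → α, √((∏ i, f i (X i)) * ∏ i, g i (X i)) = ∏ i, ∑ x, √(f i x * g i x) := by
  rw [Fintype.prod_sum]
  refine sum_congr rfl fun X _ => ?_
  rw [← prod_mul_distrib, Real.sqrt_prod _ fun i _ => mul_nonneg (hf i _) (hg i _)]

end ProductAffinity

section Bernoulli

theorem bern_nonneg {θ : ℝ} (h0 : 0 ≤ θ) (h1 : θ ≤ 1) (x : Bool) : 0 ≤ bern θ x := by
  unfold bern
  split <;> linarith

theorem sum_sqrt_bern_mul {a : ℝ} (b : ℝ) (ha0 : 0 ≤ a) (ha1 : a ≤ 1) :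
    ∑ x, √(bern a x * bern b x) = √(1 - a) * √(1 - b) + √a * √b := by
  simp [bern, Real.sqrt_mul ha0, Real.sqrt_mul (sub_nonneg.2 ha1), add_comm]

theorem renyiBer_eq_neg_two_mul_log_sum {a : ℝ} (b : ℝ) (ha0 : 0 ≤ a) (ha1 : a ≤ 1) :
    renyiBer a b = -2 * Real.log (∑ x, √(bern a x * bern b x)) := by
  rw [sum_sqrt_bern_mul b ha0 ha1, renyiBer]

theorem renyiBer_comm (a b : ℝ) : renyiBer a b = renyiBer b a := by
  simp only [renyiBer, mul_comm]

theorem renyiBer_self {a : ℝ} (ha0 : 0 ≤ a) (ha1 : a ≤ 1) : renyiBer a a = 0 := by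
  rw [renyiBer, Real.mul_self_sqrt (sub_nonneg.2 ha1), Real.mul_self_sqrt ha0]
  simp

end Bernoulli

section SBM

variable {N T K : ℕ}

def linkProb (z : Fin N → Fin K) (p q : Fin T → ℝ) (e : PairIdx N) (t : Fin T) : ℝ :=
  if z e.1.1 = z e.1.2 then p t else q t

theorem linkProb_mem_Ioo {z : Fin N → Fin K} {p q : Fin T → ℝ}
    (hp : ∀ t, 0 < p t ∧ p t < 1) (hq : ∀ t, 0 < q t ∧ q t < 1) (e : PairIdx N) (t : Fin T) :
    0 < linkProb z p q e t ∧ linkProb z p q e t < 1 := by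
  unfold linkProb
  split_ifs
  exacts [hp t, hq t]

theorem renyiBer_linkProb {z w : Fin N → Fin K} {p q : Fin T → ℝ}
    (hp : ∀ t, 0 ≤ p t ∧ p t ≤ 1) (hq : ∀ t, 0 ≤ q t ∧ q t ≤ 1) (e : PairIdx N) (t : Fin T) :
    renyiBer (linkProb z p q e t) (linkProb w p q e t) =
      if decide (z e.1.1 = z e.1.2) = decide (w e.1.1 = w e.1.2) then 0
      else renyiBer (p t) (q t) := by
  unfold linkProb
  by_cases hz : z e.1.1 = z e.1.2 <;> by_cases hw : w e.1.1 = w e.1.2 <;>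
    simp [hz, hw, renyiBer_self (hp t).1 (hp t).2, renyiBer_self (hq t).1 (hq t).2,
      renyiBer_comm (q t)]

theorem card_pairIdx_decide_ne (z w : Fin N → Fin K) :
    #{e : PairIdx N | decide (z e.1.1 = z e.1.2) ≠ decide (w e.1.1 = w e.1.2)} =
      pairCount z w false true + pairCount z w true false := by
  rw [← Fintype.card_subtype, Fintype.card_congr <| Equiv.subtypeSubtypeEquivSubtypeInter
      (fun x : Fin N × Fin N => x.1 < x.2) fun x => decide (z x.1 = z x.2) ≠ decide (w x.1 = w x.2),
    Fintype.card_subtype, pairCount, pairCount, ← card_union_of_disjoint, ← filter_or]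
  · congr 1
    ext x
    simp only [mem_filter, mem_univ, true_and, ne_eq, decide_eq_decide, decide_eq_true_eq,
      decide_eq_false_iff_not]
    tauto
  · rw [disjoint_filter]
    grind

theorem sum_sqrt_sbmDensity_mul (z w : Fin N → Fin 2) {p q : Fin T → ℝ}
    (hp : ∀ t, 0 ≤ p t ∧ p t ≤ 1) (hq : ∀ t, 0 ≤ q t ∧ q t ≤ 1) :
    ∑ X, √(sbmDensity z p q X * sbmDensity w p q X) =
      ∏ e, ∏ t, ∑ x, √(bern (linkProb z p q e t) x * bern (linkProb w p q e t) x) := by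
  have hbern (z : Fin N → Fin 2) e t x : 0 ≤ bern (linkProb z p q e t) x := by
    unfold linkProb
    split_ifs
    exacts [bern_nonneg (hp t).1 (hp t).2 x, bern_nonneg (hq t).1 (hq t).2 x]
  calc _ = ∏ e, ∑ y : Fin T → Bool,
          √((∏ t, bern (linkProb z p q e t) (y t)) * ∏ t, bern (linkProb w p q e t) (y t)) :=
        sum_sqrt_prod_mul_prod _ _ (fun e _ => prod_nonneg fun t _ => hbern z e t _)
          (fun e _ => prod_nonneg fun t _ => hbern w e t _)
    _ = _ := prod_congr rfl fun e _ => sum_sqrt_prod_mul_prod _ _ (hbern z e) (hbern w e)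

theorem neg_two_mul_log_sum_sqrt_sbmDensity_mul (z w : Fin N → Fin 2) {p q : Fin T → ℝ}
    (hp : ∀ t, 0 < p t ∧ p t < 1) (hq : ∀ t, 0 < q t ∧ q t < 1) :
    -2 * Real.log (∑ X, √(sbmDensity z p q X * sbmDensity w p q X)) =
      ∑ e, ∑ t, renyiBer (linkProb z p q e t) (linkProb w p q e t) := by
  have hz := linkProb_mem_Ioo (z := z) hp hq
  have hw := linkProb_mem_Ioo (z := w) hp hq
  have hpos e t : 0 < ∑ x, √(bern (linkProb z p q e t) x * bern (linkProb w p q e t) x) := by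
    rw [sum_sqrt_bern_mul _ (hz e t).1.le (hz e t).2.le]
    exact add_pos_of_nonneg_of_pos (by positivity)
      (mul_pos (Real.sqrt_pos.2 (hz e t).1) (Real.sqrt_pos.2 (hw e t).1))
  rw [sum_sqrt_sbmDensity_mul z w (fun t => ⟨(hp t).1.le, (hp t).2.le⟩)
      (fun t => ⟨(hq t).1.le, (hq t).2.le⟩),
    Real.log_prod fun e _ => (prod_pos fun t _ => hpos e t).ne', mul_sum]
  refine sum_congr rfl fun e _ => ?_
  rw [Real.log_prod fun t _ => (hpos e t).ne', mul_sum]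
  exact sum_congr rfl fun t _ =>
    (renyiBer_eq_neg_two_mul_log_sum _ (hz e t).1.le (hz e t).2.le).symm

end SBM

/-- `D_{1/2}(P_z ‖ P_w) = (1/2) d_Mir(z,w) · I_T` for the two-block multilayer SBM,
where `d_Mir(z,w) = 2(M_{01}+M_{10})` and `I_T = Σ_t I(p_t, q_t)`. -/
theorem stmt7 (N T : ℕ) (z w : Fin N → Fin 2) (p q : Fin T → ℝ)
    (hp : ∀ t, 0 < p t ∧ p t < 1) (hq : ∀ t, 0 < q t ∧ q t < 1) :
    -2 * Real.log (∑ X : PairIdx N → Fin T → Bool,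
        Real.sqrt (sbmDensity z p q X * sbmDensity w p q X)) =
      (1 / 2 : ℝ) *
        (2 * (pairCount z w false true + pairCount z w true false) : ℝ) *
        ∑ t, renyiBer (p t) (q t) := by
  have hp' t : 0 ≤ p t ∧ p t ≤ 1 := ⟨(hp t).1.le, (hp t).2.le⟩
  have hq' t : 0 ≤ q t ∧ q t ≤ 1 := ⟨(hq t).1.le, (hq t).2.le⟩
  calc _ = ∑ e, ∑ t, renyiBer (linkProb z p q e t) (linkProb w p q e t) :=
        neg_two_mul_log_sum_sqrt_sbmDensity_mul z w hp hq
    _ = ∑ e : PairIdx N, if decide (z e.1.1 = z e.1.2) = decide (w e.1.1 = w e.1.2) then 0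
          else ∑ t, renyiBer (p t) (q t) := by
        simp only [renyiBer_linkProb hp' hq', sum_ite_irrel, sum_const_zero]
    _ = #{e : PairIdx N | decide (z e.1.1 = z e.1.2) ≠ decide (w e.1.1 = w e.1.2)} *
          ∑ t, renyiBer (p t) (q t) := by
        rw [sum_ite, sum_const_zero, zero_add, sum_const, nsmul_eq_mul]
    _ = _ := by
        rw [card_pairIdx_decide_ne]
        push_cast
        ring
end

section
/- Let z ∈ Z be in a finite parameter set with prior Π and likelihoods P_w, w ∈ Z. For any S ⊆ Z with z ∉ S and Π(z) > 0, the expected posterior mass satisfies P_z Π_X(S) ≤ Σ_{w∈S} (Π(w)/Π(z))^{1/2} ρ_{1/2}(P_z ‖ P_w), where Π_X(w) = Π(w)P_w(X)/Σ_{w'} Π(w')P_{w'}(X), P_z Π_X(S) denotes the expectation of Π_X(S) under X ~ P_z, and ρ_{1/2}(P‖Q) = Σ_x √(P(x)Q(x)). -/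
/-!
Expand the posterior mass of `S` as a sum over `w ∈ S` and bound each term pointwise in `x`:
the evidence `∑ w', Π(w') P_{w'}(x)` dominates both `Π(z) P_z(x)` and `Π(w) P_w(x)`, hence also
their geometric mean, and dividing by it costs at most a square root.
-/

open Finset

lemma mul_div_le_sqrt_mul_of_le {a b D : ℝ} (ha : 0 ≤ a) (hb : 0 ≤ b) (haD : a ≤ D)
    (hbD : b ≤ D) : a * b / D ≤ √(a * b) := by
  rcases (ha.trans haD).eq_or_lt with hD | hD
  · simp [← hD]
  have hsqrt : √(a * b) ≤ D := by
    calc √(a * b) ≤ √(D * D) := Real.sqrt_le_sqrt (mul_le_mul haD hbD hb hD.le)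
      _ = D := Real.sqrt_mul_self hD.le
  rw [div_le_iff₀ hD]
  calc a * b = √(a * b) * √(a * b) := (Real.mul_self_sqrt (mul_nonneg ha hb)).symm
    _ ≤ √(a * b) * D := by gcongr

lemma mul_mul_div_le_sqrt_div_mul_sqrt {πz πw p q D : ℝ} (hπz : 0 < πz) (hπw : 0 ≤ πw)
    (hp : 0 ≤ p) (hq : 0 ≤ q) (hzD : πz * p ≤ D) (hwD : πw * q ≤ D) :
    p * (πw * q) / D ≤ √(πw / πz) * √(p * q) := by
  have hsqrt : √(πw / πz) * √(p * q) = √((πz * p) * (πw * q)) / πz := by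
    rw [← Real.sqrt_mul (div_nonneg hπw hπz.le), eq_div_iff hπz.ne',
      ← Real.sqrt_sq hπz.le, ← Real.sqrt_mul (by positivity), Real.sqrt_sq hπz.le]
    congr 1
    field_simp
  rw [hsqrt, le_div_iff₀ hπz]
  calc p * (πw * q) / D * πz = (πz * p) * (πw * q) / D := by ring
    _ ≤ √((πz * p) * (πw * q)) :=
      mul_div_le_sqrt_mul_of_le (mul_nonneg hπz.le hp) (mul_nonneg hπw hq) hzD hwD

theorem stmt9_general (Z 𝔛 : Type) [Fintype Z] [Fintype 𝔛]
    (prior : Z → ℝ) (P : Z → 𝔛 → ℝ)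
    (hprior : ∀ w, 0 ≤ prior w)
    (hP : ∀ w x, 0 ≤ P w x)
    (z : Z) (S : Finset Z) (hz : 0 < prior z) :
    ∑ x, P z x * ((∑ w ∈ S, prior w * P w x) / (∑ w' : Z, prior w' * P w' x)) ≤
      ∑ w ∈ S, Real.sqrt (prior w / prior z) * ∑ x, Real.sqrt (P z x * P w x) := by
  have term_le_evidence : ∀ w x, prior w * P w x ≤ ∑ w' : Z, prior w' * P w' x := fun w x =>
    single_le_sum (f := fun w' => prior w' * P w' x)
      (fun w' _ => mul_nonneg (hprior w') (hP w' x)) (mem_univ w)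
  calc ∑ x, P z x * ((∑ w ∈ S, prior w * P w x) / (∑ w' : Z, prior w' * P w' x))
      = ∑ w ∈ S, ∑ x, P z x * (prior w * P w x) / (∑ w' : Z, prior w' * P w' x) := by
        simp_rw [sum_div, mul_sum, mul_div_assoc]
        exact sum_comm
    _ ≤ ∑ w ∈ S, ∑ x, √(prior w / prior z) * √(P z x * P w x) := by
        gcongr with w _ x _
        exact mul_mul_div_le_sqrt_div_mul_sqrt hz (hprior w) (hP z x) (hP w x)
          (term_le_evidence z x) (term_le_evidence w x)
    _ = ∑ w ∈ S, √(prior w / prior z) * ∑ x, √(P z x * P w x) := by simp_rw [mul_sum]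

/-- Posterior contraction bound: for a finite parameter set with prior `Π`,
likelihoods `P_w`, true parameter `z` with `Π(z) > 0`, and any `S` not containing `z`,
the expected posterior mass of `S` under `P_z` is at most
`Σ_{w ∈ S} (Π(w)/Π(z))^{1/2} ρ_{1/2}(P_z ‖ P_w)`. -/
theorem stmt9 (Z 𝔛 : Type) [Fintype Z] [Fintype 𝔛]
    (prior : Z → ℝ) (P : Z → 𝔛 → ℝ)
    (hprior : ∀ w, 0 ≤ prior w) (hpriorsum : ∑ w, prior w = 1)
    (hP : ∀ w x, 0 ≤ P w x) (hPsum : ∀ w, ∑ x, P w x = 1)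
    (z : Z) (S : Finset Z) (hzS : z ∉ S) (hz : 0 < prior z) :
    ∑ x, P z x * ((∑ w ∈ S, prior w * P w x) / (∑ w' : Z, prior w' * P w' x)) ≤
      ∑ w ∈ S, Real.sqrt (prior w / prior z) * ∑ x, Real.sqrt (P z x * P w x) :=
  stmt9_general Z 𝔛 prior P hprior hP z S hz
end

section
/- Suppose (N_ν) and (I_ν) are sequences with N_ν → ∞ and N_ν I_ν → ∞. Fix ε > 0. Then Σ_{εN_ν < k ≤ N_ν/2} C(N_ν,k) exp(−(1/2) I_ν (N_ν−k) k) → 0 as ν → ∞. (Almost exact recovery bound: the posterior error Err_z(εN) → 0 when I_T ≫ 1/N.) -/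
/-!
For `εN < k ≤ N/2` we have `C(N,k) ≤ 2^N ≤ (2^{1/ε})^k` and `N - k ≥ N/2`, so the `k`-th summand
is at most `b^k` with `b = 2^{1/ε} e^{-NI/4}`. The sum is then at most `b/(1-b)`, and `b → 0`
because `NI → ∞`.
-/

open Filter Topology Finset

lemma sum_pow_le_div_one_sub {b : ℝ} (hb₀ : 0 ≤ b) (hb₁ : b < 1) {S : Finset ℕ} (hS : 0 ∉ S) :
    ∑ k ∈ S, b ^ k ≤ b / (1 - b) := by
  have hgeom : ∑ k ∈ insert 0 S, b ^ k ≤ (1 - b)⁻¹ :=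
    tsum_geometric_of_lt_one hb₀ hb₁ ▸
      (summable_geometric_of_lt_one hb₀ hb₁).sum_le_tsum _ fun k _ => pow_nonneg hb₀ k
  rw [sum_insert hS, pow_zero] at hgeom
  have : b / (1 - b) = (1 - b)⁻¹ - 1 := by field_simp [(sub_pos.2 hb₁).ne']; ring
  linarith

lemma choose_mul_exp_le_pow {N k : ℕ} {I ε : ℝ} (hε : 0 < ε) (hI : 0 ≤ I)
    (hεk : ε * N < k) (hkN : 2 * k ≤ N) :
    (N.choose k : ℝ) * Real.exp (-(1 / 2) * I * ((N : ℝ) - k) * k) ≤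
      Real.exp (Real.log 2 / ε - N * I / 4) ^ k := by
  have hchoose : (N.choose k : ℝ) ≤ Real.exp (k * (Real.log 2 / ε)) := by
    calc (N.choose k : ℝ) ≤ 2 ^ N := by exact_mod_cast Nat.choose_le_two_pow N k
      _ = Real.exp (N * Real.log 2) := by
        rw [← Real.rpow_natCast, Real.rpow_def_of_pos two_pos, mul_comm]
      _ ≤ Real.exp (k * (Real.log 2 / ε)) := by
        refine Real.exp_le_exp.2 ?_
        rw [mul_div_assoc', le_div_iff₀ hε]
        nlinarith [Real.log_pos one_lt_two]
  have hexp : -(1 / 2) * I * ((N : ℝ) - k) * k ≤ k * (-(N * I / 4)) := by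
    have hkN' : 2 * (k : ℝ) ≤ N := by exact_mod_cast hkN
    nlinarith [mul_nonneg hI (Nat.cast_nonneg k : (0 : ℝ) ≤ k)]
  calc (N.choose k : ℝ) * Real.exp (-(1 / 2) * I * ((N : ℝ) - k) * k)
      ≤ Real.exp (k * (Real.log 2 / ε)) * Real.exp (k * (-(N * I / 4))) := by
        gcongr
    _ = Real.exp (Real.log 2 / ε - N * I / 4) ^ k := by
        rw [← Real.exp_add, ← Real.exp_nat_mul]
        ring_nf

theorem stmt14_general (N : ℕ → ℕ) (I : ℕ → ℝ)
    (hNI : Tendsto (fun ν => (N ν : ℝ) * I ν) atTop atTop)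
    (ε : ℝ) (hε : 0 < ε) :
    Tendsto (fun ν =>
        ∑ k ∈ (Finset.Ioc 0 (N ν / 2)).filter (fun k : ℕ => ε * (N ν : ℝ) < (k : ℝ)),
          ((N ν).choose k : ℝ) *
            Real.exp (-(1 / 2) * I ν * ((N ν : ℝ) - k) * k))
      atTop (nhds 0) := by
  set b : ℕ → ℝ := fun ν => Real.exp (Real.log 2 / ε - N ν * I ν / 4)
  have hb : Tendsto b atTop (𝓝 0) :=
    Real.tendsto_exp_atBot.comp <| tendsto_atBot_add_const_left _ _ <|
      tendsto_neg_atTop_atBot.comp (hNI.atTop_div_const four_pos)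
  have hgeom : Tendsto (fun ν => b ν / (1 - b ν)) atTop (𝓝 0) := by
    have := hb.div (tendsto_const_nhds (x := (1 : ℝ)) |>.sub hb) (by norm_num)
    rwa [sub_zero, zero_div] at this
  refine squeeze_zero' (Eventually.of_forall fun ν => sum_nonneg fun k _ => by positivity) ?_ hgeom
  filter_upwards [hb.eventually (gt_mem_nhds one_pos), hNI.eventually_gt_atTop 0] with ν hb₁ hNIν
  have hI : 0 ≤ I ν := (pos_of_mul_pos_right hNIν (Nat.cast_nonneg _)).le
  calc _ ≤ ∑ k ∈ (Ioc 0 (N ν / 2)).filter (fun k : ℕ => ε * (N ν : ℝ) < (k : ℝ)), b ν ^ k := by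
        refine sum_le_sum fun k hk => ?_
        simp only [mem_filter, mem_Ioc] at hk
        exact choose_mul_exp_le_pow hε hI hk.2 (by omega)
    _ ≤ b ν / (1 - b ν) := sum_pow_le_div_one_sub (Real.exp_pos _).le hb₁ (by simp)

/-- Almost exact recovery bound: if `N_ν → ∞` and `N_ν I_ν → ∞`, then for any fixed
`ε > 0`, `Σ_{εN_ν < k ≤ N_ν/2} C(N_ν,k) exp(−(1/2) I_ν (N_ν−k) k) → 0`. -/
theorem stmt14 (N : ℕ → ℕ) (I : ℕ → ℝ)
    (hN : Tendsto (fun ν => (N ν : ℝ)) atTop atTop)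
    (hNI : Tendsto (fun ν => (N ν : ℝ) * I ν) atTop atTop)
    (ε : ℝ) (hε : 0 < ε) :
    Tendsto (fun ν =>
        ∑ k ∈ (Finset.Ioc 0 (N ν / 2)).filter (fun k : ℕ => ε * (N ν : ℝ) < (k : ℝ)),
          ((N ν).choose k : ℝ) *
            Real.exp (-(1 / 2) * I ν * ((N ν : ℝ) - k) * k))
      atTop (nhds 0) :=
  stmt14_general N I hNI ε hε
end

section
/- Suppose (N_ν) and (I_ν) are sequences with N_ν → ∞ and N_ν I_ν ≥ (2+δ) log N_ν for a fixed constant δ > 0. Then Σ_{1 ≤ k ≤ N_ν/2} C(N_ν,k) exp(−(1/2) I_ν (N_ν−k) k) → 0 as ν → ∞. (Exact recovery: Err_z(0) → 0.) -/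
open Filter Finset Real

lemma mychoose_le_two_pow (n k : ℕ) : n.choose k ≤ 2 ^ n := by
  rcases le_or_gt k n with h | h
  · calc n.choose k ≤ ∑ m ∈ Finset.range (n + 1), n.choose m :=
        Finset.single_le_sum (fun _ _ => Nat.zero_le _)
          (Finset.mem_range.mpr (Nat.lt_succ_of_le h))
    _ = 2 ^ n := Nat.sum_range_choose n
  · simp [Nat.choose_eq_zero_of_lt h]

lemma key_bound (n : ℕ) (i δ' : ℝ) (hδ'0 : 0 < δ') (hδ'1 : δ' ≤ 1)
    (hn : 8 ≤ n) (hNI : (2 + δ') * Real.log n ≤ (n : ℝ) * i) :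
    ∑ k ∈ Finset.Icc 1 (n / 2),
      (n.choose k : ℝ) * Real.exp (-(1 / 2) * i * ((n : ℝ) - k) * k)
    ≤ (Real.exp (Real.exp (-(δ' / 4 * Real.log n))) - 1)
        + n * Real.exp (n * Real.log 2 - δ' / 16 * n * Real.log n) := by
  set L := Real.log n with hLdef
  have hn0 : 0 < (n : ℝ) := by positivity
  have hL1 : (1 : ℝ) ≤ L := by
    rw [hLdef, show (1:ℝ) = Real.log (Real.exp 1) by simp]
    apply Real.log_le_log (Real.exp_pos 1)
    calc Real.exp 1 ≤ 2.7182818286 := Real.exp_one_lt_d9.le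
      _ ≤ (8 : ℝ) := by norm_num
      _ ≤ n := by exact_mod_cast hn
  have hL0 : (0 : ℝ) ≤ L := by linarith
  have hi0 : 0 ≤ i := by
    nlinarith
  set a := Real.exp (-(δ' / 4 * L)) with hadef
  set B := Real.exp (n * Real.log 2 - δ' / 16 * n * L) with hBdef
  have hterm : ∀ k ∈ Finset.Icc 1 (n / 2),
      (n.choose k : ℝ) * Real.exp (-(1 / 2) * i * ((n : ℝ) - k) * k)
      ≤ if (k : ℝ) ≤ δ' * n / 8 then a ^ k / (k.factorial : ℝ) else B := by
    intro k hk
    rw [Finset.mem_Icc] at hk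
    have hk1 : 1 ≤ k := hk.1
    have h2k : 2 * k ≤ n := by omega
    have hk0 : (0 : ℝ) ≤ k := by positivity
    have h2k' : 2 * (k : ℝ) ≤ n := by exact_mod_cast h2k
    have hin : (2 + δ') * L ≤ (n : ℝ) * i := hNI
    split_ifs with hsmall
    · -- small k
      have hC : (n.choose k : ℝ) ≤ (n : ℝ) ^ k / (k.factorial : ℝ) := by
        have := Nat.choose_le_pow_div (α := ℝ) k n
        push_cast at this ⊢
        convert this using 2
      have hexp : -(1 / 2) * i * ((n : ℝ) - k) * k ≤ (k : ℝ) * (-((1 + δ' / 4) * L)) := by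
        have h1 : (1 + δ' / 4) * L ≤ 1 / 2 * i * ((n : ℝ) - k) := by
          nlinarith [mul_nonneg hi0 (sub_nonneg.2 hsmall),
            mul_nonneg (sub_nonneg.2 hin) (by linarith : (0:ℝ) ≤ 1 - δ' / 8),
            mul_nonneg (mul_nonneg hL0 hδ'0.le) (by linarith : (0:ℝ) ≤ 2 - δ')]
        nlinarith [mul_le_mul_of_nonneg_left h1 hk0]
      calc (n.choose k : ℝ) * Real.exp (-(1 / 2) * i * ((n : ℝ) - k) * k)
          ≤ ((n : ℝ) ^ k / (k.factorial : ℝ)) * Real.exp ((k : ℝ) * (-((1 + δ' / 4) * L))) := by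
            apply mul_le_mul hC (Real.exp_le_exp.mpr hexp) (Real.exp_pos _).le
            positivity
        _ = a ^ k / (k.factorial : ℝ) := by
            rw [hadef, ← Real.exp_nat_mul, div_mul_eq_mul_div,
              show (n : ℝ) = Real.exp L from (Real.exp_log hn0).symm,
              ← Real.exp_nat_mul, ← Real.exp_add]
            ring_nf
    · -- large k
      push_neg at hsmall
      have hC : (n.choose k : ℝ) ≤ 2 ^ n := by exact_mod_cast mychoose_le_two_pow n k
      have hexp : -(1 / 2) * i * ((n : ℝ) - k) * k ≤ -(δ' / 16 * n * L) := by
        nlinarith [mul_nonneg (mul_nonneg hi0 hk0) (by linarith : (0:ℝ) ≤ (n:ℝ) - 2 * k),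
          mul_nonneg (sub_nonneg.2 hin) hk0,
          mul_nonneg hL0 (by linarith : (0:ℝ) ≤ (k : ℝ) - δ' * n / 8),
          mul_nonneg (mul_nonneg hL0 hk0) hδ'0.le]
      calc (n.choose k : ℝ) * Real.exp (-(1 / 2) * i * ((n : ℝ) - k) * k)
          ≤ (2 : ℝ) ^ n * Real.exp (-(δ' / 16 * n * L)) := by
            apply mul_le_mul hC (Real.exp_le_exp.mpr hexp) (Real.exp_pos _).le
            positivity
        _ = B := by
            have h2n : (2 : ℝ) ^ n = Real.exp (n * Real.log 2) := by
              rw [Real.exp_nat_mul, Real.exp_log two_pos]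
            rw [hBdef, h2n, ← Real.exp_add]
            ring_nf
  calc ∑ k ∈ Finset.Icc 1 (n / 2),
        (n.choose k : ℝ) * Real.exp (-(1 / 2) * i * ((n : ℝ) - k) * k)
      ≤ ∑ k ∈ Finset.Icc 1 (n / 2),
          (if (k : ℝ) ≤ δ' * n / 8 then a ^ k / (k.factorial : ℝ) else B) :=
        Finset.sum_le_sum hterm
    _ = (∑ k ∈ (Finset.Icc 1 (n / 2)).filter (fun k : ℕ => (k : ℝ) ≤ δ' * n / 8),
          a ^ k / (k.factorial : ℝ))
        + ∑ k ∈ (Finset.Icc 1 (n / 2)).filter (fun k : ℕ => ¬ (k : ℝ) ≤ δ' * n / 8), B :=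
        Finset.sum_ite _ _
    _ ≤ (Real.exp a - 1) + n * B := by
        gcongr
        · -- small sum
          have hsub : (Finset.Icc 1 (n / 2)).filter (fun k : ℕ => (k : ℝ) ≤ δ' * n / 8)
              ⊆ Finset.Ico 1 (n + 1) := by
            intro k hk
            simp only [Finset.mem_filter, Finset.mem_Icc] at hk
            rw [Finset.mem_Ico]
            omega
          have h1 : ∑ k ∈ (Finset.Icc 1 (n / 2)).filter (fun k : ℕ => (k : ℝ) ≤ δ' * n / 8),
              a ^ k / (k.factorial : ℝ) ≤ ∑ k ∈ Finset.Ico 1 (n + 1), a ^ k / (k.factorial : ℝ) :=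
            Finset.sum_le_sum_of_subset_of_nonneg hsub (fun k _ _ => by positivity)
          have h2 : ∑ k ∈ Finset.Ico 0 1, a ^ k / (k.factorial : ℝ)
              + ∑ k ∈ Finset.Ico 1 (n + 1), a ^ k / (k.factorial : ℝ)
              = ∑ k ∈ Finset.Ico 0 (n + 1), a ^ k / (k.factorial : ℝ) :=
            Finset.sum_Ico_consecutive (fun k => a ^ k / (k.factorial : ℝ)) (by norm_num) (by omega)
          have h3 : ∑ k ∈ Finset.Ico 0 (n + 1), a ^ k / (k.factorial : ℝ) ≤ Real.exp a := by
            rw [← Finset.range_eq_Ico]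
            exact Real.sum_le_exp_of_nonneg (Real.exp_pos _).le _
          have h4 : ∑ k ∈ Finset.Ico 0 1, a ^ k / (k.factorial : ℝ) = 1 := by simp
          linarith
        · -- large sum
          rw [Finset.sum_const, nsmul_eq_mul]
          apply mul_le_mul _ le_rfl (Real.exp_pos _).le hn0.le
          calc ((Finset.filter (fun k : ℕ => ¬ (k : ℝ) ≤ δ' * n / 8) (Finset.Icc 1 (n / 2))).card : ℝ)
              ≤ ((Finset.Icc 1 (n / 2)).card : ℝ) := by
                exact_mod_cast Finset.card_filter_le _ _
            _ ≤ n := by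
                rw [Nat.card_Icc]
                exact_mod_cast by omega

/-- Exact recovery bound: if `N_ν → ∞` and `N_ν I_ν ≥ (2+δ) log N_ν` for a fixed
`δ > 0`, then `Σ_{1 ≤ k ≤ N_ν/2} C(N_ν,k) exp(−(1/2) I_ν (N_ν−k) k) → 0`. -/
theorem stmt15 (N : ℕ → ℕ) (I : ℕ → ℝ) (δ : ℝ) (hδ : 0 < δ)
    (hN : Tendsto (fun ν => (N ν : ℝ)) atTop atTop)
    (hNI : ∀ ν, (2 + δ) * Real.log (N ν) ≤ (N ν : ℝ) * I ν) :
    Tendsto (fun ν =>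
        ∑ k ∈ Finset.Icc 1 (N ν / 2),
          ((N ν).choose k : ℝ) *
            Real.exp (-(1 / 2) * I ν * ((N ν : ℝ) - k) * k))
      atTop (nhds 0) := by
  set δ' := min δ 1 with hδ'def
  have hδ'0 : 0 < δ' := lt_min hδ one_pos
  have hδ'1 : δ' ≤ 1 := min_le_right _ _
  have hδ'δ : δ' ≤ δ := min_le_left _ _
  have hlog : Tendsto (fun ν => Real.log (N ν)) atTop atTop :=
    Real.tendsto_log_atTop.comp hN
  -- the small-k part of the bound tends to 0
  have ha : Tendsto (fun ν => Real.exp (-(δ' / 4 * Real.log (N ν)))) atTop (nhds 0) := by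
    apply Real.tendsto_exp_atBot.comp
    exact tendsto_neg_atTop_atBot.comp (hlog.const_mul_atTop (by positivity))
  have h1 : Tendsto (fun ν => Real.exp (Real.exp (-(δ' / 4 * Real.log (N ν)))) - 1)
      atTop (nhds 0) := by
    have := ((Real.continuous_exp.tendsto 0).comp ha).sub_const 1
    simpa using this
  -- the large-k part of the bound tends to 0
  have hB : Tendsto (fun ν => (N ν : ℝ) *
      Real.exp ((N ν : ℝ) * Real.log 2 - δ' / 16 * (N ν : ℝ) * Real.log (N ν)))
      atTop (nhds 0) := by
    apply squeeze_zero' (g := fun ν => Real.exp (-(Real.log (N ν))))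
    · filter_upwards with ν; positivity
    · filter_upwards [hN.eventually_ge_atTop (max 8 (64 / δ')),
        hlog.eventually_ge_atTop (max 1 (32 * Real.log 2 / δ'))] with ν hn hL
      set n : ℝ := (N ν : ℝ)
      set L : ℝ := Real.log (N ν)
      have hn8 : (8 : ℝ) ≤ n := le_trans (le_max_left _ _) hn
      have hn64 : 64 / δ' ≤ n := le_trans (le_max_right _ _) hn
      have hL1 : (1 : ℝ) ≤ L := le_trans (le_max_left _ _) hL
      have hL32 : 32 * Real.log 2 / δ' ≤ L := le_trans (le_max_right _ _) hL
      have hn0 : (0 : ℝ) < n := by linarith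
      have e1 : (64 : ℝ) ≤ δ' * n := by
        rw [div_le_iff₀ hδ'0] at hn64; linarith [hn64]
      have e2 : 32 * Real.log 2 ≤ δ' * L := by
        rw [div_le_iff₀ hδ'0] at hL32; linarith [hL32]
      have hlog2 : (0 : ℝ) ≤ Real.log 2 := Real.log_nonneg one_le_two
      have key : n * Real.log 2 - δ' / 16 * n * L ≤ -L - L := by
        nlinarith [mul_nonneg (sub_nonneg.2 e1) (by linarith : (0:ℝ) ≤ L),
          mul_nonneg (sub_nonneg.2 e2) hn0.le]
      calc n * Real.exp (n * Real.log 2 - δ' / 16 * n * L)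
          = Real.exp (L + (n * Real.log 2 - δ' / 16 * n * L)) := by
            rw [Real.exp_add, Real.exp_log hn0]
        _ ≤ Real.exp (-L) := Real.exp_le_exp.mpr (by linarith)
    · exact Real.tendsto_exp_atBot.comp (tendsto_neg_atTop_atBot.comp hlog)
  apply squeeze_zero' (g := fun ν =>
    (Real.exp (Real.exp (-(δ' / 4 * Real.log (N ν)))) - 1)
      + (N ν : ℝ) * Real.exp ((N ν : ℝ) * Real.log 2 - δ' / 16 * (N ν : ℝ) * Real.log (N ν)))
  · filter_upwards with ν
    apply Finset.sum_nonneg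
    intro k _
    positivity
  · filter_upwards [hN.eventually_ge_atTop 8] with ν h8
    have hn8 : 8 ≤ N ν := by exact_mod_cast h8
    have hlog0 : 0 ≤ Real.log (N ν) := Real.log_nonneg (by exact_mod_cast by omega : (1:ℝ) ≤ N ν)
    exact key_bound (N ν) (I ν) δ' hδ'0 hδ'1 hn8
      (le_trans (by nlinarith [hNI ν]) (hNI ν))
  · simpa using h1.add hB
end
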